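/- arXiv:1609.05264 — 2 statements merged into one kernel-verified Lean document; each statement's English description precedes it below -/
import Mathlib

section
/- Let P_i^{ID}⊆Q be connected and disjoint from ⋃_{j≠i} P_j, and let k∈P_i^{ID}. If S1 and S2 are connected subsets of Q each satisfying conditions (1) and (2) of the additive-subset definition (with P_i^{add}(k) replaced by S1, respectively S2), then S1∪S2 is connected and also satisfies conditions (1) and (2). -/
open scoped Classical ENNReal

noncomputable section

universe u

/-- A weighted graph environment `G(Q) = (Q, E)` with undirected edges and
positive edge weights. -/
structure Env (V : Type u) where
  adj : V → V → Prop
  adj_symm : ∀ u v, adj u v → adj v u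
  adj_irrefl : ∀ v, ¬ adj v v
  w : V → V → ℝ
  w_pos : ∀ u v, adj u v → 0 < w u v
  w_symm : ∀ u v, w u v = w v u

variable {V : Type u}

/-- `PathIn G S p` : `p` is a (nonempty) walk of `G` all of whose vertices lie in `S`. -/
def PathIn (G : Env V) (S : Set V) : List V → Prop
  | [] => False
  | [v] => v ∈ S
  | u :: v :: rest => u ∈ S ∧ G.adj u v ∧ PathIn G S (v :: rest)

/-- Total weighted length of a walk. -/
def pathLen (G : Env V) : List V → ℝ≥0∞
  | [] => 0
  | [_] => 0
  | u :: v :: rest => ENNReal.ofReal (G.w u v) + pathLen G (v :: rest)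

/-- Weighted shortest-path distance between two vertices inside the subgraph of `G`
induced on `S` (`∞` if no connecting path inside `S` exists). -/
def dIn (G : Env V) (S : Set V) (a b : V) : ℝ≥0∞ :=
  sInf {L : ℝ≥0∞ | ∃ p : List V, PathIn G S p ∧ p.head? = some a ∧
    p.getLast? = some b ∧ pathLen G p = L}

/-- Length of a shortest path inside the subgraph induced on `S` from `a` to the set `B`. -/
def dInSet (G : Env V) (S : Set V) (a : V) (B : Set V) : ℝ≥0∞ :=
  ⨅ b ∈ B, dIn G S a b

/-- A subset `S` is connected if its induced subgraph is connected. -/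
def ConnIn (G : Env V) (S : Set V) : Prop :=
  ∀ a ∈ S, ∀ b ∈ S, ∃ p : List V, PathIn G S p ∧ p.head? = some a ∧ p.getLast? = some b

/-- A vertex `k` is adjacent to a set `S`. -/
def AdjTo (G : Env V) (k : V) (S : Set V) : Prop :=
  k ∉ S ∧ ∃ v ∈ S, G.adj k v

/-- An `m`-covering of the vertex set. -/
def IsCovering {m : ℕ} (P : Fin m → Set V) : Prop :=
  (∀ v : V, ∃ i, v ∈ P i) ∧ ∀ i, (P i).Nonempty

/-- An `m`-partition of the vertex set. -/
def IsPartition {m : ℕ} (P : Fin m → Set V) : Prop :=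
  IsCovering P ∧ ∀ i j : Fin m, i ≠ j → P i ∩ P j = ∅

/-- Conditions (1) and (2) of the additive-subset definition (together with
connectivity of the candidate set `S`). -/
def AddCond {m : ℕ} (G : Env V) (s : Fin m → ℝ) (P : Fin m → Set V) (c : Fin m → V)
    (T : Fin m → ℝ) (i : Fin m) (Pid : Set V) (k : V) (S : Set V) : Prop :=
  ConnIn G S ∧ Pid ⊆ S ∧
    ∀ j : Fin m, j ≠ i → ∀ h ∈ S ∩ P j,
      T j = 0 ∧
      ENNReal.ofReal (1 / s i) * dIn G S h k < ENNReal.ofReal (1 / s j) * dIn G (P j) h (c j)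

/-- `S` is *the* additive subset `P_i^add(k)` : the largest connected subset
satisfying conditions (1) and (2); it contains every subset satisfying them. -/
def IsAddSet {m : ℕ} (G : Env V) (s : Fin m → ℝ) (P : Fin m → Set V) (c : Fin m → V)
    (T : Fin m → ℝ) (i : Fin m) (Pid : Set V) (k : V) (S : Set V) : Prop :=
  AddCond G s P c T i Pid k S ∧ ∀ S' : Set V, AddCond G s P c T i Pid k S' → S' ⊆ S

/-- The coverage cost `H(c, P, t)`. -/
def Hcost {m : ℕ} [Fintype V] (G : Env V) (s : Fin m → ℝ) (Φ : V → ℝ → ℝ)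
    (c : Fin m → V) (P : Fin m → Set V) (t : ℝ) : ℝ≥0∞ :=
  ∑ k : V,
    sInf {x : ℝ≥0∞ | ∃ i : Fin m, k ∈ P i ∧ x = ENNReal.ofReal (1 / s i) * dIn G (P i) k (c i)} *
      ENNReal.ofReal (Φ k t)

/-- The complete state maintained by the base station together with all the
agents' local variables. -/
structure CovState (V : Type u) (m : ℕ) where
  P : Fin m → Set V
  c : Fin m → V
  ID : V → Fin m
  T : Fin m → ℝ
  ω : Fin m → ℝ
  PA : Fin m → Set V
  cA : Fin m → V
  Ppd : Fin m → Set V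
  τA : Fin m → ℝ
  ωA : Fin m → ℝ

namespace CovState

variable {m : ℕ}

/-- `P_i^ID`, the set of vertices whose identifier equals `i`. -/
def Pid (σ : CovState V m) (i : Fin m) : Set V := {k | σ.ID k = i}

/-- The local likelihood function `Φ_i^A`. -/
def ΦA (σ : CovState V m) (Φ : V → ℝ → ℝ) (i : Fin m) (k : V) (t : ℝ) : ℝ :=
  if k ∈ σ.PA i ∧ (σ.τA i ≤ t - σ.ωA i ∨ k ∉ σ.Ppd i) then Φ k t else 0

/-- The prohibited region `Proh_i(t)`. -/
def Proh (σ : CovState V m) (i : Fin m) (t : ℝ) : Set V :=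
  {k ∈ σ.PA i | t - σ.ωA i < σ.τA i ∧ k ∈ σ.Ppd i}

/-- Continuous (flow) evolution of the state for `δ` time units: only the timers
change, each decreasing at unit rate until reaching `0`. -/
def decay (σ : CovState V m) (δ : ℝ) : CovState V m :=
  { σ with T := fun i => max (σ.T i - δ) 0 }

end CovState

/-- The trivial branch of Algorithm 1 (`T_i > 0` and `P_i^* = P_i`): only the
timing variables of the communicating agent are touched. -/
def NoopUpdate {m : ℕ} (i : Fin m) (t0 : ℝ) (σ σ' : CovState V m) : Prop :=
  σ' = { σ with τA := Function.update σ.τA i (σ.τA i - t0 + σ.ω i),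
                ωA := Function.update σ.ωA i t0,
                ω := Function.update σ.ω i t0 }

/-- The main branch of Algorithm 1 (together with the timer update, Algorithm 2),
executed upon an exchange between the base station and agent `i` at time `t0`. -/
def FullUpdate {m : ℕ} [Fintype V] (G : Env V) (s : Fin m → ℝ) (Φ : V → ℝ → ℝ)
    (Δbar ΔH : ℝ) (i : Fin m) (t0 : ℝ) (σ σ' : CovState V m) : Prop :=
  ∃ (cstar : V) (Pstar : Set V),
    -- `(cstar, Pstar)` is one of the candidate configurations:
    ((cstar = σ.c i ∧ Pstar = σ.Pid i) ∨
      (cstar ∈ σ.Pid i ∧ IsAddSet G s σ.P σ.c σ.T i (σ.Pid i) cstar Pstar)) ∧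
    -- and it minimizes the cost `H` among all candidate configurations:
    (∀ (k : V) (S : Set V),
      ((k = σ.c i ∧ S = σ.Pid i) ∨
        (k ∈ σ.Pid i ∧ IsAddSet G s σ.P σ.c σ.T i (σ.Pid i) k S)) →
      Hcost G s Φ (Function.update σ.c i cstar) (Function.update σ.P i Pstar) t0 ≤
        Hcost G s Φ (Function.update σ.c i k) (Function.update σ.P i S) t0) ∧
    σ'.P = Function.update σ.P i Pstar ∧
    σ'.PA = Function.update σ.PA i Pstar ∧
    σ'.c = Function.update σ.c i cstar ∧
    σ'.cA = Function.update σ.cA i cstar ∧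
    σ'.Ppd = Function.update σ.Ppd i (Pstar \ σ.Pid i) ∧
    σ'.ω = Function.update σ.ω i t0 ∧
    σ'.ωA = Function.update σ.ωA i t0 ∧
    σ'.ID = (fun k => if k ∈ Pstar then i else σ.ID k) ∧
    (∀ j : Fin m, j ≠ i → (σ.P j ∩ Pstar).Nonempty → σ'.T j = σ.ω j + Δbar - t0) ∧
    (∀ j : Fin m, j ≠ i → ¬(σ.P j ∩ Pstar).Nonempty → σ'.T j = σ.T j) ∧
    -- `T_i := Δ_max^Bf + Δ_H`, where `Δ_max^Bf` is as in Algorithm 2 (max ∅ := 0):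
    σ'.T i =
      max
        (sSup {x : ℝ | ∃ k ∈ σ.P i \ Pstar,
          x = (1 / s i) * (dInSet G (σ.P i) k (Pstar \ (Pstar \ σ.Pid i))).toReal})
        (sSup {x : ℝ | ∃ j : Fin m, j ≠ i ∧ (σ.P j ∩ Pstar).Nonempty ∧
          x = σ.ω j + Δbar +
            sSup {y : ℝ | ∃ k ∈ σ.P j ∩ Pstar,
              y = (1 / s j) * (dInSet G (σ.P j) k (σ.P j \ Pstar)).toReal} - t0}) + ΔH ∧
    -- `τ_i^A := Δ_max^Bf`:
    σ'.τA = Function.update σ.τA i (σ'.T i - ΔH)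

/-- The one-to-base-station update of Algorithm 1 performed at time `t0` upon an
exchange with agent `i`; `σ` is the state just before and `σ'` just after. -/
def UpdateAt {m : ℕ} [Fintype V] (G : Env V) (s : Fin m → ℝ) (Φ : V → ℝ → ℝ)
    (Δbar ΔH : ℝ) (i : Fin m) (t0 : ℝ) (σ σ' : CovState V m) : Prop :=
  (0 < σ.T i ∧ σ.Pid i = σ.P i ∧ NoopUpdate i t0 σ σ') ∨
  (¬(0 < σ.T i ∧ σ.Pid i = σ.P i) ∧ FullUpdate G s Φ Δbar ΔH i t0 σ σ')

/-- Assumption 1 (initialization). -/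
def InitOK {m : ℕ} (G : Env V) (ΔH : ℝ) (σ : CovState V m) : Prop :=
  IsPartition σ.P ∧ (∀ i, ConnIn G (σ.P i)) ∧
    ∀ i : Fin m,
      σ.PA i = σ.P i ∧ σ.P i = σ.Pid i ∧ σ.cA i = σ.c i ∧ σ.c i ∈ σ.P i ∧
      σ.Ppd i = ∅ ∧ σ.T i = 0 ∧ σ.ω i = 0 ∧ σ.ωA i = 0 ∧ σ.τA i = -ΔH

/-- An execution of the asynchronous one-to-base-station coverage scheme:
exchanges occur at the times `etime n` with the agents `eagent n`, successive
exchanges are separated by at least `Δlow`, each agent communicates at least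
every `Δ̄` time units, the state is initialized according to Assumption 1,
flows (only the timers decay) in between exchanges, and jumps according to
Algorithm 1 at each exchange. -/
structure Execution [Fintype V] (G : Env V) (m : ℕ) (s : Fin m → ℝ) (Φ : V → ℝ → ℝ)
    (Δlow Δbar ΔH : ℝ) where
  etime : ℕ → ℝ
  eagent : ℕ → Fin m
  state : ℝ → CovState V m
  s_pos : ∀ i, 0 < s i
  Δlow_pos : 0 < Δlow
  Δbar_pos : 0 < Δbar
  ΔH_pos : 0 < ΔH
  Φ_nonneg : ∀ k t, 0 ≤ Φ k t
  Φ_sum : ∀ t : ℝ, ∑ k : V, Φ k t = 1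
  etime_pos : ∀ n, 0 < etime n
  etime_sep : ∀ n, etime n + Δlow ≤ etime (n + 1)
  persistent : ∀ (i : Fin m) (t : ℝ), 0 ≤ t →
    ∃ n, eagent n = i ∧ t ≤ etime n ∧ etime n ≤ t + Δbar
  init : InitOK G ΔH (state 0)
  flow : ∀ t₁ t₂ : ℝ, 0 ≤ t₁ → t₁ ≤ t₂ →
    (∀ n, ¬(t₁ < etime n ∧ etime n ≤ t₂)) →
    state t₂ = (state t₁).decay (t₂ - t₁)
  jump : ∀ (n : ℕ) (t₁ : ℝ), 0 ≤ t₁ → t₁ < etime n →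
    (∀ p, ¬(t₁ < etime p ∧ etime p < etime n)) →
    UpdateAt G s Φ Δbar ΔH (eagent n) (etime n)
      ((state t₁).decay (etime n - t₁)) (state (etime n))

/-- Twice the sum, over the edges of `G`, of the graph distance between the
endpoints, halved (i.e. the sum over unordered edges). -/
def edgeSum [Fintype V] (G : Env V) : ℝ :=
  (1 / 2) * ∑ p : V × V, if G.adj p.1 p.2 then (dIn G Set.univ p.1 p.2).toReal else 0

/-- `d̄ := max_i (1/s_i) · Σ_{{k1,k2} ∈ E} d_Q(k1,k2)`. -/
def dbar {m : ℕ} [Fintype V] (G : Env V) (s : Fin m → ℝ) : ℝ :=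
  sSup {x : ℝ | ∃ i : Fin m, x = (1 / s i) * edgeSum G}

end

section

variable {V : Type*}

def Env.JoinedIn (G : Env V) (S : Set V) (a b : V) : Prop :=
  ∃ p : List V, PathIn G S p ∧ p.head? = some a ∧ p.getLast? = some b

theorem PathIn.mono {G : Env V} {S S' : Set V} (hSS : S ⊆ S') :
    ∀ {p : List V}, PathIn G S p → PathIn G S' p
  | [], hp => hp.elim
  | [_], hp => hSS hp
  | _ :: _ :: _, hp => ⟨hSS hp.1, hp.2.1, PathIn.mono hSS hp.2.2⟩

theorem Env.JoinedIn.mono {G : Env V} {S S' : Set V} {a b : V} (hSS : S ⊆ S') :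
    G.JoinedIn S a b → G.JoinedIn S' a b
  | ⟨p, hp, hh, hl⟩ => ⟨p, hp.mono hSS, hh, hl⟩

theorem Env.JoinedIn.cons {G : Env V} {S : Set V} {u v b : V} (hu : u ∈ S) (huv : G.adj u v) :
    G.JoinedIn S v b → G.JoinedIn S u b
  | ⟨[], hq, _, _⟩ => hq.elim
  | ⟨x :: q, hq, hh, hl⟩ => by
    obtain rfl : x = v := by simpa using hh
    exact ⟨u :: x :: q, ⟨hu, huv, hq⟩, rfl, by simpa [List.getLast?_cons_cons] using hl⟩

theorem Env.JoinedIn.trans {G : Env V} {S : Set V} {a b c : V} :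
    G.JoinedIn S a b → G.JoinedIn S b c → G.JoinedIn S a c := by
  rintro ⟨p, hp, hh, hl⟩ hbc
  induction p generalizing a with
  | nil => exact hp.elim
  | cons u rest ih =>
    obtain rfl : u = a := by simpa using hh
    cases rest with
    | nil =>
      obtain rfl : u = b := by simpa using hl
      exact hbc
    | cons v rest =>
      exact (ih hp.2.2 rfl (by simpa [List.getLast?_cons_cons] using hl)).cons hp.1 hp.2.1

theorem ConnIn.union {G : Env V} {S₁ S₂ : Set V} {k : V} (h₁ : ConnIn G S₁) (h₂ : ConnIn G S₂)
    (hk₁ : k ∈ S₁) (hk₂ : k ∈ S₂) : ConnIn G (S₁ ∪ S₂) := by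
  have through_k : ∀ a ∈ S₁ ∪ S₂, G.JoinedIn (S₁ ∪ S₂) a k ∧ G.JoinedIn (S₁ ∪ S₂) k a := by
    rintro a (ha | ha)
    · exact ⟨Env.JoinedIn.mono Set.subset_union_left (h₁ a ha k hk₁),
        Env.JoinedIn.mono Set.subset_union_left (h₁ k hk₁ a ha)⟩
    · exact ⟨Env.JoinedIn.mono Set.subset_union_right (h₂ a ha k hk₂),
        Env.JoinedIn.mono Set.subset_union_right (h₂ k hk₂ a ha)⟩
  intro a ha b hb
  exact (through_k a ha).1.trans (through_k b hb).2

theorem dIn_anti (G : Env V) {S S' : Set V} (hSS : S ⊆ S') (a b : V) :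
    dIn G S' a b ≤ dIn G S a b := by
  apply sInf_le_sInf
  rintro L ⟨p, hp, hh, hl, hlen⟩
  exact ⟨p, hp.mono hSS, hh, hl, hlen⟩

end

theorem additive_subset_union_general {V : Type*} {m : ℕ} (G : Env V)
    (s : Fin m → ℝ)
    (P : Fin m → Set V) (c : Fin m → V) (T : Fin m → ℝ)
    (i : Fin m) (PidSet : Set V)
    (k : V) (hk : k ∈ PidSet)
    (S1 S2 : Set V)
    (h1 : AddCond G s P c T i PidSet k S1)
    (h2 : AddCond G s P c T i PidSet k S2) :
    AddCond G s P c T i PidSet k (S1 ∪ S2) := by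
  obtain ⟨hc1, hid1, hd1⟩ := h1
  obtain ⟨hc2, hid2, hd2⟩ := h2
  refine ⟨hc1.union hc2 (hid1 hk) (hid2 hk), hid1.trans Set.subset_union_left, ?_⟩
  rintro j hj h ⟨hS | hS, hP⟩
  · obtain ⟨hT0, hlt⟩ := hd1 j hj h ⟨hS, hP⟩
    exact ⟨hT0, (mul_le_mul_right (dIn_anti G Set.subset_union_left h k) _).trans_lt hlt⟩
  · obtain ⟨hT0, hlt⟩ := hd2 j hj h ⟨hS, hP⟩
    exact ⟨hT0, (mul_le_mul_right (dIn_anti G Set.subset_union_right h k) _).trans_lt hlt⟩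

/-- closure of the additive-subset conditions under unions.
If `P_i^ID` is connected and disjoint from `⋃_{j ≠ i} P_j`, `k ∈ P_i^ID`, and
`S1`, `S2` are connected subsets each satisfying conditions (1) and (2) of the
additive-subset definition, then `S1 ∪ S2` is connected and also satisfies
conditions (1) and (2). -/
theorem additive_subset_union {V : Type*} {m : ℕ} (G : Env V)
    (s : Fin m → ℝ) (hs : ∀ i, 0 < s i)
    (P : Fin m → Set V) (c : Fin m → V) (T : Fin m → ℝ) (hT : ∀ j, 0 ≤ T j)
    (i : Fin m) (PidSet : Set V)
    (hconn : ConnIn G PidSet)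
    (hdisj : ∀ j : Fin m, j ≠ i → PidSet ∩ P j = ∅)
    (k : V) (hk : k ∈ PidSet)
    (S1 S2 : Set V)
    (h1 : AddCond G s P c T i PidSet k S1)
    (h2 : AddCond G s P c T i PidSet k S2) :
    AddCond G s P c T i PidSet k (S1 ∪ S2) :=
  additive_subset_union_general G s P c T i PidSet k hk S1 S2 h1 h2
end

section
/- Suppose Assumption 1 holds and that, at the time of each exchange occurring prior to a fixed time t̄≥0, the required algorithmic constructions are well-posed and the base station and the communicating agent update their respective variables via Algorithm 1. Then for every k∈Q and every time t≤t̄: (1) k∈P_{ID_k}; (2) k belongs to at most 2 elements of P; (3) if T_{ID_k}=0 then k∉P_j for every j≠ID_k; and (4) if k∈P_j with j≠ID_k, then P_j∩P^{ID}_ℓ=∅ for every ℓ∉{j, ID_k}. -/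
open scoped Classical ENNReal

/-!
Everything follows from an invariant of the hybrid system that is preserved by the flow and by
every exchange. Besides set-theoretic facts (a vertex lies in the cell of its owner and in at
most one other cell, a cell holds vertices of at most one foreign owner, an owner that lends a
vertex holds only its own ones), it carries two timer bounds: the owner of a vertex lent to `j`
has a timer exceeding `j`'s deadline `ω_j + Δ̄` by at least `Δ_H`, and an agent holding foreign
vertices has a timer no smaller than its own deadline. Since every agent communicates again by
its deadline, these timers are positive at every exchange, while an additive set only takes
vertices from cells whose timer is zero. So an exchange never takes a vertex of an owner that
lends one, nor of a cell of another agent that holds foreign vertices, and the set-theoretic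
facts survive. Property (3) is the first timer bound read at the current time.
-/

open Function

namespace CovState

variable {V : Type*} {m : ℕ}

@[simp] lemma mem_Pid {σ : CovState V m} {k : V} {i : Fin m} : k ∈ σ.Pid i ↔ σ.ID k = i :=
  Iff.rfl

@[simp] lemma decay_ID (σ : CovState V m) (δ : ℝ) : (σ.decay δ).ID = σ.ID := rfl
@[simp] lemma decay_ω (σ : CovState V m) (δ : ℝ) : (σ.decay δ).ω = σ.ω := rfl
@[simp] lemma decay_T (σ : CovState V m) (δ : ℝ) (i : Fin m) :
    (σ.decay δ).T i = max (σ.T i - δ) 0 := rfl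

structure Invariant (Δbar ΔH : ℝ) (σ : CovState V m) (t : ℝ) : Prop where
  mem_P_ID : ∀ k, k ∈ σ.P (σ.ID k)
  ID_eq_or_eq : ∀ k j₁ j₂, j₁ ≠ j₂ → k ∈ σ.P j₁ → k ∈ σ.P j₂ → σ.ID k = j₁ ∨ σ.ID k = j₂
  exists_P_subset : ∀ j, ∃ i, σ.P j ⊆ σ.Pid j ∪ σ.Pid i
  P_ID_subset : ∀ k j, j ≠ σ.ID k → k ∈ σ.P j → σ.P (σ.ID k) ⊆ σ.Pid (σ.ID k)
  T_ID_ge : ∀ k j, j ≠ σ.ID k → k ∈ σ.P j → σ.ω j + Δbar - t + ΔH ≤ σ.T (σ.ID k)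
  T_ge : ∀ k j, k ∈ σ.P j → σ.ID k ≠ j → σ.ω j + Δbar - t ≤ σ.T j
  ω_nonneg : ∀ j, 0 ≤ σ.ω j

namespace Invariant

variable {Δbar ΔH t : ℝ} {σ : CovState V m} {k : V} {j : Fin m}

lemma decay (h : σ.Invariant Δbar ΔH t) (t' : ℝ) :
    (σ.decay (t' - t)).Invariant Δbar ΔH t' where
  mem_P_ID := h.mem_P_ID
  ID_eq_or_eq := h.ID_eq_or_eq
  exists_P_subset := h.exists_P_subset
  P_ID_subset := h.P_ID_subset
  T_ID_ge k j hj hk := by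
    simp only [decay_T, decay_ω, decay_ID]
    exact le_max_of_le_left (by linarith [h.T_ID_ge k j hj hk])
  T_ge k j hk hkj := by
    simp only [decay_T, decay_ω]
    exact le_max_of_le_left (by linarith [h.T_ge k j hk hkj])
  ω_nonneg := h.ω_nonneg

lemma T_ID_pos (h : σ.Invariant Δbar ΔH t) (hΔH : 0 < ΔH) (hlate : t ≤ σ.ω j + Δbar)
    (hj : j ≠ σ.ID k) (hk : k ∈ σ.P j) : 0 < σ.T (σ.ID k) := by
  linarith [h.T_ID_ge k j hj hk]

lemma T_pos (h : σ.Invariant Δbar ΔH t) (hlate : t < σ.ω j + Δbar) (hk : k ∈ σ.P j)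
    (hkj : σ.ID k ≠ j) : 0 < σ.T j := by
  linarith [h.T_ge k j hk hkj]

lemma encard_le_two (h : σ.Invariant Δbar ΔH t) (k : V) : {i | k ∈ σ.P i}.encard ≤ 2 := by
  obtain ⟨j, hj⟩ : ∃ j, {i | k ∈ σ.P i} ⊆ {σ.ID k, j} := by
    by_cases hlent : ∃ j, j ≠ σ.ID k ∧ k ∈ σ.P j
    · obtain ⟨j, hj, hkj⟩ := hlent
      refine ⟨j, fun i hki => ?_⟩
      by_cases hij : i = j
      · exact Or.inr hij
      · exact (h.ID_eq_or_eq k i j hij hki hkj).imp Eq.symm fun e => absurd e.symm hj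
    · exact ⟨σ.ID k, fun i hki => Or.inl (not_not.mp fun hne => hlent ⟨i, hne, hki⟩)⟩
  calc {i | k ∈ σ.P i}.encard ≤ ({σ.ID k, j} : Set (Fin m)).encard := Set.encard_mono hj
    _ ≤ 2 := (Set.encard_insert_le _ _).trans (by simp [one_add_one_eq_two])

lemma inter_Pid_eq_empty (h : σ.Invariant Δbar ΔH t) (hj : j ≠ σ.ID k) (hk : k ∈ σ.P j)
    {l : Fin m} (hlj : l ≠ j) (hlk : l ≠ σ.ID k) : σ.P j ∩ σ.Pid l = ∅ := by
  obtain ⟨i, hi⟩ := h.exists_P_subset j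
  have hik : σ.ID k = i := (hi hk).resolve_left hj.symm
  refine Set.eq_empty_of_forall_notMem fun x ⟨hxj, hxl⟩ => ?_
  rcases hi hxj with hx | hx
  · exact hlj (hxl.symm.trans hx)
  · exact hlk (hxl.symm.trans (hx.trans hik.symm))

end Invariant

/-- The effect of an exchange with agent `a` at time `t0` that makes `Pstar` the new cell of `a`.
Both branches of Algorithm 1 have this form, the trivial one with `Pstar = P_a^ID = P_a`. -/
structure Reassignment (Δbar ΔH : ℝ) (a : Fin m) (t0 : ℝ) (Pstar : Set V)
    (σ σ' : CovState V m) : Prop where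
  Pid_subset : σ.Pid a ⊆ Pstar
  T_eq_zero_or_ID_eq : ∀ ℓ ≠ a, ∀ h ∈ σ.P ℓ, h ∈ Pstar → σ.T ℓ = 0 ∨ σ.ID h = a
  P_eq : σ'.P = update σ.P a Pstar
  ID_eq : σ'.ID = fun k => if k ∈ Pstar then a else σ.ID k
  ω_eq : σ'.ω = update σ.ω a t0
  T_ge_of_not_disjoint : ∀ j ≠ a, ¬Disjoint (σ.P j) Pstar → σ.ω j + Δbar - t0 ≤ σ'.T j
  T_eq_of_disjoint : ∀ j ≠ a, Disjoint (σ.P j) Pstar → σ'.T j = σ.T j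
  T_self_ge : ∀ j ≠ a, ∀ k ∈ σ.P j ∩ Pstar, σ.ω j + Δbar - t0 + ΔH ≤ σ'.T a

namespace Reassignment

variable {Δbar ΔH t0 : ℝ} {a j : Fin m} {k : V} {Pstar : Set V} {σ σ' : CovState V m}

lemma P_self (hR : Reassignment Δbar ΔH a t0 Pstar σ σ') : σ'.P a = Pstar := by
  rw [hR.P_eq, update_self]

lemma P_of_ne (hR : Reassignment Δbar ΔH a t0 Pstar σ σ') (hj : j ≠ a) : σ'.P j = σ.P j := by
  rw [hR.P_eq, update_of_ne hj]

lemma ID_of_mem (hR : Reassignment Δbar ΔH a t0 Pstar σ σ') (hk : k ∈ Pstar) : σ'.ID k = a := by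
  rw [hR.ID_eq]
  exact if_pos hk

lemma ID_of_notMem (hR : Reassignment Δbar ΔH a t0 Pstar σ σ') (hk : k ∉ Pstar) :
    σ'.ID k = σ.ID k := by
  rw [hR.ID_eq]
  exact if_neg hk

lemma ID_ne_of_notMem (hR : Reassignment Δbar ΔH a t0 Pstar σ σ') (hk : k ∉ Pstar) :
    σ.ID k ≠ a :=
  fun h => hk (hR.Pid_subset h)

lemma ne_of_mem_P_of_notMem (hR : Reassignment Δbar ΔH a t0 Pstar σ σ') (hkj : k ∈ σ'.P j)
    (hk : k ∉ Pstar) : j ≠ a := by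
  rintro rfl
  exact hk (hR.P_self ▸ hkj)

lemma Pid_self (hR : Reassignment Δbar ΔH a t0 Pstar σ σ') : σ'.Pid a = Pstar := by
  ext k
  by_cases hk : k ∈ Pstar
  · simp [hR.ID_of_mem hk, hk]
  · simp [hR.ID_of_notMem hk, hR.ID_ne_of_notMem hk, hk]

lemma Pid_of_ne (hR : Reassignment Δbar ΔH a t0 Pstar σ σ') {ℓ : Fin m} (hℓ : ℓ ≠ a) :
    σ'.Pid ℓ = σ.Pid ℓ \ Pstar := by
  ext k
  by_cases hk : k ∈ Pstar
  · simp [hR.ID_of_mem hk, hk, hℓ.symm]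
  · simp [hR.ID_of_notMem hk, hk]

lemma ω_of_ne (hR : Reassignment Δbar ΔH a t0 Pstar σ σ') (hj : j ≠ a) : σ'.ω j = σ.ω j := by
  rw [hR.ω_eq, update_of_ne hj]

/-- An owner that lends a vertex has a positive timer, so its cell is out of reach. -/
lemma disjoint_P_ID (hR : Reassignment Δbar ΔH a t0 Pstar σ σ')
    (hinv : σ.Invariant Δbar ΔH t0) (hΔH : 0 < ΔH) (hlate : t0 ≤ σ.ω j + Δbar)
    (hj : j ≠ σ.ID k) (hk : k ∈ σ.P j) (hka : σ.ID k ≠ a) : Disjoint (σ.P (σ.ID k)) Pstar := by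
  refine Set.disjoint_left.mpr fun h hhP hhS => ?_
  rcases hR.T_eq_zero_or_ID_eq _ hka h hhP hhS with hT | hID
  · exact (hinv.T_ID_pos hΔH hlate hj hk).ne' hT
  · exact hka ((hinv.P_ID_subset k j hj hk hhP).symm.trans hID)

lemma ID_eq_of_not_disjoint (hR : Reassignment Δbar ΔH a t0 Pstar σ σ')
    (hinv : σ.Invariant Δbar ΔH t0) (hlate : t0 < σ.ω j + Δbar) (hj : j ≠ a)
    (hmeet : ¬Disjoint (σ.P j) Pstar) (hkj : k ∈ σ.P j) (hk : k ∉ Pstar) : σ.ID k = j := by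
  obtain ⟨h, hhP, hhS⟩ := Set.not_disjoint_iff.mp hmeet
  by_contra hne
  rcases hR.T_eq_zero_or_ID_eq j hj h hhP hhS with hT | hID
  · exact (hinv.T_pos hlate hkj hne).ne' hT
  · -- the foreign owner of the cell of `j` is `a`, whose vertices all lie in `Pstar`
    obtain ⟨i, hi⟩ := hinv.exists_P_subset j
    have hia : σ.ID h = i := (hi hhP).resolve_left fun e => hj (e.symm.trans hID)
    exact (hi hkj).elim hne fun e => hR.ID_ne_of_notMem hk (e.trans (hia.symm.trans hID))

lemma mem_P_ID (hR : Reassignment Δbar ΔH a t0 Pstar σ σ') (hinv : σ.Invariant Δbar ΔH t0)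
    (k : V) : k ∈ σ'.P (σ'.ID k) := by
  by_cases hk : k ∈ Pstar
  · rwa [hR.ID_of_mem hk, hR.P_self]
  · rw [hR.ID_of_notMem hk, hR.P_of_ne (hR.ID_ne_of_notMem hk)]
    exact hinv.mem_P_ID k

lemma ID_eq_or_eq (hR : Reassignment Δbar ΔH a t0 Pstar σ σ') (hinv : σ.Invariant Δbar ΔH t0)
    (hΔH : 0 < ΔH) (hlate : ∀ j, t0 ≤ σ.ω j + Δbar) {k : V} {j₁ j₂ : Fin m} (hne : j₁ ≠ j₂)
    (h₁ : k ∈ σ'.P j₁) (h₂ : k ∈ σ'.P j₂) : σ'.ID k = j₁ ∨ σ'.ID k = j₂ := by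
  by_cases hk : k ∈ Pstar
  · rw [hR.ID_of_mem hk]
    by_contra! ha
    rw [hR.P_of_ne ha.1.symm] at h₁
    rw [hR.P_of_ne ha.2.symm] at h₂
    have hlent {j j' : Fin m} (hj : σ.ID k = j) (hj' : j' ≠ j) (hkj' : k ∈ σ.P j')
        (hja : a ≠ j) : False :=
      Set.disjoint_left.mp (hR.disjoint_P_ID hinv hΔH (hlate j') (hj ▸ hj') hkj'
        (hj ▸ hja.symm)) (hinv.mem_P_ID k) hk
    rcases hinv.ID_eq_or_eq k j₁ j₂ hne h₁ h₂ with hj | hj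
    · exact hlent hj hne.symm h₂ ha.1
    · exact hlent hj hne h₁ ha.2
  · rw [hR.P_of_ne (hR.ne_of_mem_P_of_notMem h₁ hk)] at h₁
    rw [hR.P_of_ne (hR.ne_of_mem_P_of_notMem h₂ hk)] at h₂
    rw [hR.ID_of_notMem hk]
    exact hinv.ID_eq_or_eq k j₁ j₂ hne h₁ h₂

lemma exists_P_subset (hR : Reassignment Δbar ΔH a t0 Pstar σ σ')
    (hinv : σ.Invariant Δbar ΔH t0) (hlate : ∀ j ≠ a, t0 < σ.ω j + Δbar) (j : Fin m) :
    ∃ i, σ'.P j ⊆ σ'.Pid j ∪ σ'.Pid i := by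
  by_cases hja : j = a
  · subst hja
    exact ⟨j, by rw [hR.P_self, hR.Pid_self, Set.union_self]⟩
  rw [hR.P_of_ne hja, hR.Pid_of_ne hja]
  by_cases hmeet : Disjoint (σ.P j) Pstar
  · obtain ⟨i, hi⟩ := hinv.exists_P_subset j
    have hsub : σ.P j ⊆ (σ.Pid j ∪ σ.Pid i) \ Pstar := fun k hk =>
      ⟨hi hk, Set.disjoint_left.mp hmeet hk⟩
    by_cases hia : i = a
    · refine ⟨j, fun k hk => Or.inl ⟨(hsub hk).1.resolve_right fun e => ?_, (hsub hk).2⟩⟩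
      exact (hsub hk).2 (hR.Pid_subset (hia ▸ e))
    · refine ⟨i, ?_⟩
      rwa [hR.Pid_of_ne hia, ← Set.union_sdiff_distrib]
  · refine ⟨a, fun k hk => ?_⟩
    rw [hR.Pid_self]
    by_cases hkS : k ∈ Pstar
    · exact Or.inr hkS
    · exact Or.inl ⟨hR.ID_eq_of_not_disjoint hinv (hlate j hja) hja hmeet hk hkS, hkS⟩

lemma P_ID_subset (hR : Reassignment Δbar ΔH a t0 Pstar σ σ') (hinv : σ.Invariant Δbar ΔH t0)
    (hΔH : 0 < ΔH) (hlate : ∀ j, t0 ≤ σ.ω j + Δbar) {k : V} {j : Fin m} (hj : j ≠ σ'.ID k)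
    (hkj : k ∈ σ'.P j) : σ'.P (σ'.ID k) ⊆ σ'.Pid (σ'.ID k) := by
  by_cases hk : k ∈ Pstar
  · rw [hR.ID_of_mem hk, hR.P_self, hR.Pid_self]
  have hja := hR.ne_of_mem_P_of_notMem hkj hk
  have hka := hR.ID_ne_of_notMem hk
  rw [hR.ID_of_notMem hk] at hj ⊢
  rw [hR.P_of_ne hja] at hkj
  rw [hR.P_of_ne hka, hR.Pid_of_ne hka]
  exact fun x hx => ⟨hinv.P_ID_subset k j hj hkj hx,
    Set.disjoint_left.mp (hR.disjoint_P_ID hinv hΔH (hlate j) hj hkj hka) hx⟩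

lemma T_ID_ge (hR : Reassignment Δbar ΔH a t0 Pstar σ σ') (hinv : σ.Invariant Δbar ΔH t0)
    (hΔH : 0 < ΔH) (hlate : ∀ j, t0 ≤ σ.ω j + Δbar) {k : V} {j : Fin m} (hj : j ≠ σ'.ID k)
    (hkj : k ∈ σ'.P j) : σ'.ω j + Δbar - t0 + ΔH ≤ σ'.T (σ'.ID k) := by
  by_cases hk : k ∈ Pstar
  · rw [hR.ID_of_mem hk] at hj ⊢
    rw [hR.P_of_ne hj] at hkj
    rw [hR.ω_of_ne hj]
    exact hR.T_self_ge j hj k ⟨hkj, hk⟩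
  have hja := hR.ne_of_mem_P_of_notMem hkj hk
  have hka := hR.ID_ne_of_notMem hk
  rw [hR.ID_of_notMem hk] at hj ⊢
  rw [hR.P_of_ne hja] at hkj
  rw [hR.ω_of_ne hja, hR.T_eq_of_disjoint _ hka (hR.disjoint_P_ID hinv hΔH (hlate j) hj hkj hka)]
  exact hinv.T_ID_ge k j hj hkj

lemma T_ge (hR : Reassignment Δbar ΔH a t0 Pstar σ σ') (hinv : σ.Invariant Δbar ΔH t0)
    {k : V} {j : Fin m} (hkj : k ∈ σ'.P j) (hne : σ'.ID k ≠ j) : σ'.ω j + Δbar - t0 ≤ σ'.T j := by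
  have hja : j ≠ a := by
    rintro rfl
    exact hne (hR.ID_of_mem (hR.P_self ▸ hkj))
  rw [hR.ω_of_ne hja]
  by_cases hmeet : Disjoint (σ.P j) Pstar
  · rw [hR.P_of_ne hja] at hkj
    have hk : k ∉ Pstar := Set.disjoint_left.mp hmeet hkj
    rw [hR.ID_of_notMem hk] at hne
    rw [hR.T_eq_of_disjoint j hja hmeet]
    exact hinv.T_ge k j hkj hne
  · exact hR.T_ge_of_not_disjoint j hja hmeet

lemma ω_nonneg (hR : Reassignment Δbar ΔH a t0 Pstar σ σ') (hinv : σ.Invariant Δbar ΔH t0)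
    (ht0 : 0 ≤ t0) (j : Fin m) : 0 ≤ σ'.ω j := by
  rw [hR.ω_eq, update_apply]
  split_ifs
  exacts [ht0, hinv.ω_nonneg j]

end Reassignment

lemma Invariant.reassign {Δbar ΔH t0 : ℝ} {a : Fin m} {Pstar : Set V} {σ σ' : CovState V m}
    (hinv : σ.Invariant Δbar ΔH t0) (hR : Reassignment Δbar ΔH a t0 Pstar σ σ') (hΔH : 0 < ΔH)
    (ht0 : 0 ≤ t0) (hlate : ∀ j, t0 ≤ σ.ω j + Δbar) (hlate' : ∀ j ≠ a, t0 < σ.ω j + Δbar) :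
    σ'.Invariant Δbar ΔH t0 where
  mem_P_ID := hR.mem_P_ID hinv
  ID_eq_or_eq _ _ _ hne h₁ h₂ := hR.ID_eq_or_eq hinv hΔH hlate hne h₁ h₂
  exists_P_subset := hR.exists_P_subset hinv hlate'
  P_ID_subset _ _ hj hkj := hR.P_ID_subset hinv hΔH hlate hj hkj
  T_ID_ge _ _ hj hkj := hR.T_ID_ge hinv hΔH hlate hj hkj
  T_ge _ _ hkj hne := hR.T_ge hinv hkj hne
  ω_nonneg := hR.ω_nonneg hinv ht0

end CovState

open CovState

section Updates

variable {V : Type*} {m : ℕ} {Δbar ΔH t0 : ℝ} {a : Fin m} {σ σ' : CovState V m}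

lemma NoopUpdate.reassignment (h : NoopUpdate a t0 σ σ') (hinv : σ.Invariant Δbar ΔH t0)
    (hPid : σ.Pid a = σ.P a) : Reassignment Δbar ΔH a t0 (σ.Pid a) σ σ' := by
  subst h
  refine
    { Pid_subset := subset_rfl
      T_eq_zero_or_ID_eq := fun _ _ _ _ hh => Or.inr hh
      P_eq := by rw [hPid, update_eq_self]
      ID_eq := funext fun k => by split_ifs with hk; exacts [hk, rfl]
      ω_eq := rfl
      T_ge_of_not_disjoint := fun j hj hmeet => ?_
      T_eq_of_disjoint := fun _ _ _ => rfl
      T_self_ge := fun j hj k ⟨hkj, hka⟩ => ?_ }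
  · obtain ⟨h, hhj, hha⟩ := Set.not_disjoint_iff.mp hmeet
    exact hinv.T_ge h j hhj fun e => hj (e.symm.trans hha)
  · exact (mem_Pid.mp hka) ▸ hinv.T_ID_ge k j ((mem_Pid.mp hka).symm ▸ hj) hkj

lemma FullUpdate.reassignment [Fintype V] {G : Env V} {s : Fin m → ℝ} {Φ : V → ℝ → ℝ}
    (hs : ∀ i, 0 < s i) (h : FullUpdate G s Φ Δbar ΔH a t0 σ σ') :
    ∃ Pstar, Reassignment Δbar ΔH a t0 Pstar σ σ' := by
  obtain ⟨cstar, Pstar, hcand, -, hP, -, -, -, -, hω, -, hID, hreset, hkeep, hTa, -⟩ := h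
  have hcand' : Pstar = σ.Pid a ∨ σ.Pid a ⊆ Pstar ∧ ∀ ℓ ≠ a, ∀ h ∈ Pstar ∩ σ.P ℓ, σ.T ℓ = 0 :=
    hcand.imp And.right fun h => ⟨h.2.1.2.1, fun ℓ hℓ k hk => (h.2.1.2.2 ℓ hℓ k hk).1⟩
  refine ⟨Pstar, ?_, ?_, hP, hID, hω, ?_, ?_, ?_⟩
  · rcases hcand' with rfl | ⟨hsub, -⟩
    exacts [subset_rfl, hsub]
  · rintro ℓ hℓ h hhℓ hh
    rcases hcand' with rfl | ⟨-, hzero⟩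
    exacts [Or.inr hh, Or.inl (hzero ℓ hℓ h ⟨hh, hhℓ⟩)]
  · exact fun j hj hmeet =>
      (hreset j hj (Set.not_disjoint_iff_nonempty_inter.mp hmeet)).ge
  · exact fun j hj hdisj => hkeep j hj (Set.not_nonempty_iff_eq_empty.mpr
      (Set.disjoint_iff_inter_eq_empty.mp hdisj))
  · intro j hj k hk
    rw [hTa]
    -- `T_a` dominates the term of agent `j` in `Δ_max^Bf`, whose inner supremum is nonnegative
    gcongr ?_ + ΔH
    apply le_max_of_le_right
    refine le_trans ?_ (le_csSup ?_ ⟨j, hj, ⟨k, hk⟩, rfl⟩)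
    · refine sub_le_sub_right (le_add_of_nonneg_right (Real.sSup_nonneg ?_)) t0
      rintro _ ⟨k, -, rfl⟩
      exact mul_nonneg (one_div_pos.mpr (hs j)).le ENNReal.toReal_nonneg
    · apply Set.Finite.bddAbove
      apply (Set.finite_range (ι := Fin m) _).subset
      rintro _ ⟨j, -, -, rfl⟩
      exact ⟨j, rfl⟩

lemma UpdateAt.reassignment [Fintype V] {G : Env V} {s : Fin m → ℝ} {Φ : V → ℝ → ℝ}
    (hs : ∀ i, 0 < s i) (hinv : σ.Invariant Δbar ΔH t0)
    (h : UpdateAt G s Φ Δbar ΔH a t0 σ σ') : ∃ Pstar, Reassignment Δbar ΔH a t0 Pstar σ σ' := by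
  rcases h with ⟨-, hPid, hnoop⟩ | ⟨-, hfull⟩
  · exact ⟨_, hnoop.reassignment hinv hPid⟩
  · exact hfull.reassignment hs

end Updates

namespace Execution

variable {V : Type*} [Fintype V] {G : Env V} {m : ℕ} {s : Fin m → ℝ} {Φ : V → ℝ → ℝ}
  {Δlow Δbar ΔH : ℝ} (E : Execution G m s Φ Δlow Δbar ΔH)

lemma etime_monotone : Monotone E.etime :=
  monotone_nat_of_le_succ fun n => by linarith [E.etime_sep n, E.Δlow_pos]

lemma etime_add_Δlow_le {n p : ℕ} (h : n < p) : E.etime n + Δlow ≤ E.etime p :=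
  (E.etime_sep n).trans (E.etime_monotone h)

lemma etime_strictMono : StrictMono E.etime :=
  fun _ _ h => by linarith [E.etime_add_Δlow_le h, E.Δlow_pos]

lemma eq_of_etime_le_of_lt {n p : ℕ} (h₁ : E.etime n ≤ E.etime p)
    (h₂ : E.etime p < E.etime n + Δlow) : p = n := by
  rcases lt_trichotomy p n with h | h | h
  · exact absurd h₁ (E.etime_strictMono h).not_ge
  · exact h
  · exact absurd h₂ (E.etime_add_Δlow_le h).not_gt

lemma mul_Δlow_le_etime (n : ℕ) : n * Δlow ≤ E.etime n := by
  induction n with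
  | zero => simpa using (E.etime_pos 0).le
  | succ n ih => push_cast; linarith [E.etime_sep n]

lemma exists_lt_etime (t : ℝ) : ∃ n, t < E.etime n := by
  obtain ⟨n, hn⟩ := exists_nat_gt (t / Δlow)
  exact ⟨n, ((div_lt_iff₀ E.Δlow_pos).mp hn).trans_le (E.mul_Δlow_le_etime n)⟩

lemma le_add_Δbar {j : Fin m} {w t : ℝ} (hw : 0 ≤ w)
    (hrec : ∀ n, E.eagent n = j → E.etime n < t → E.etime n ≤ w) : t ≤ w + Δbar := by
  by_contra! h
  obtain ⟨n, hn, h₁, h₂⟩ := E.persistent j (w + (t - w - Δbar) / 2) (by linarith)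
  linarith [hrec n hn (by linarith)]

lemma etime_lt_add_Δbar {n₀ : ℕ} {j : Fin m} {w : ℝ} (hj : E.eagent n₀ ≠ j) (hw : 0 ≤ w)
    (hrec : ∀ n, E.eagent n = j → E.etime n < E.etime n₀ → E.etime n ≤ w) :
    E.etime n₀ < w + Δbar := by
  -- the `n₀`-th exchange is the only one in `[etime n₀, etime n₀ + Δlow)`
  have := E.le_add_Δbar (t := E.etime n₀ + Δlow / 2) hw fun n hn hlt =>
    hrec n hn <| lt_of_not_ge fun hge =>
      hj (E.eq_of_etime_le_of_lt hge (by linarith [E.Δlow_pos]) ▸ hn)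
  linarith [E.Δlow_pos]

def Recorded (σ : CovState V m) (t : ℝ) : Prop :=
  ∀ n, E.etime n ≤ t → E.etime n ≤ σ.ω (E.eagent n)

def InvariantAt (t : ℝ) : Prop :=
  (E.state t).Invariant Δbar ΔH t ∧ E.Recorded (E.state t) t

lemma invariantAt_zero : E.InvariantAt 0 := by
  obtain ⟨-, -, hinit⟩ := E.init
  set σ := E.state 0
  have hPid (j : Fin m) {k : V} (hk : k ∈ σ.P j) : σ.ID k = j := by
    rwa [(hinit j).2.1] at hk
  have hinv : σ.Invariant Δbar ΔH 0 :=
    { mem_P_ID := fun k => by rw [(hinit _).2.1]; rfl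
      ID_eq_or_eq := fun k j₁ _ _ h₁ _ => Or.inl (hPid j₁ h₁)
      exists_P_subset := fun j => ⟨j, by rw [(hinit j).2.1, Set.union_self]⟩
      P_ID_subset := fun k j hj hk => absurd (hPid j hk).symm hj
      T_ID_ge := fun k j hj hk => absurd (hPid j hk).symm hj
      T_ge := fun k j hk hkj => absurd (hPid j hk) hkj
      ω_nonneg := fun j => (hinit j).2.2.2.2.2.2.1.ge }
  exact ⟨hinv, fun n hn => absurd hn (E.etime_pos n).not_ge⟩

variable {E} in
lemma InvariantAt.flow {t₁ t₂ : ℝ} (h : E.InvariantAt t₁) (ht₁ : 0 ≤ t₁) (h₁₂ : t₁ ≤ t₂)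
    (hquiet : ∀ n, ¬(t₁ < E.etime n ∧ E.etime n ≤ t₂)) : E.InvariantAt t₂ := by
  unfold InvariantAt
  rw [E.flow t₁ t₂ ht₁ h₁₂ hquiet]
  exact ⟨h.1.decay t₂, fun n hn => h.2 n (not_lt.mp fun hlt => hquiet n ⟨hlt, hn⟩)⟩

lemma invariantAt_etime_of_update {n₀ : ℕ} {σ : CovState V m}
    (hinv : σ.Invariant Δbar ΔH (E.etime n₀))
    (hrec : ∀ n, E.etime n < E.etime n₀ → E.etime n ≤ σ.ω (E.eagent n))
    (hupd : UpdateAt G s Φ Δbar ΔH (E.eagent n₀) (E.etime n₀) σ (E.state (E.etime n₀))) :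
    E.InvariantAt (E.etime n₀) := by
  obtain ⟨Pstar, hR⟩ := hupd.reassignment E.s_pos hinv
  have hlate (j : Fin m) : E.etime n₀ ≤ σ.ω j + Δbar :=
    E.le_add_Δbar (j := j) (hinv.ω_nonneg j) fun n hn hlt => hn ▸ hrec n hlt
  have hlate' (j : Fin m) (hj : j ≠ E.eagent n₀) : E.etime n₀ < σ.ω j + Δbar :=
    E.etime_lt_add_Δbar hj.symm (hinv.ω_nonneg j) fun n hn hlt => hn ▸ hrec n hlt
  refine ⟨hinv.reassign hR E.ΔH_pos (E.etime_pos n₀).le hlate hlate', fun n hn => ?_⟩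
  rw [hR.ω_eq, update_apply]
  split_ifs with ha
  · exact hn
  · exact hrec n (hn.lt_of_ne fun heq => ha (congrArg E.eagent (E.etime_strictMono.injective heq)))

lemma invariantAt_etime (n : ℕ) (h : ∀ t, 0 ≤ t → t < E.etime n → E.InvariantAt t) :
    E.InvariantAt (E.etime n) := by
  -- no exchange happens strictly between `etime n - Δlow` and `etime n`
  set t₁ := max 0 (E.etime n - Δlow)
  have ht₁ : t₁ < E.etime n := max_lt (E.etime_pos n) (by linarith [E.Δlow_pos])
  have hquiet (p : ℕ) : ¬(t₁ < E.etime p ∧ E.etime p < E.etime n) := fun ⟨h₁, h₂⟩ => by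
    linarith [E.etime_add_Δlow_le (E.etime_strictMono.lt_iff_lt.mp h₂),
      le_max_right 0 (E.etime n - Δlow)]
  obtain ⟨hinv, hrec⟩ := h t₁ (le_max_left _ _) ht₁
  refine E.invariantAt_etime_of_update (hinv.decay _) (fun p hp => ?_)
    (E.jump n t₁ (le_max_left _ _) ht₁ hquiet)
  exact hrec p (not_lt.mp fun hlt => hquiet p ⟨hlt, hp⟩)

lemma invariantAt_of_lt_etime (n : ℕ) : ∀ t, 0 ≤ t → t < E.etime n → E.InvariantAt t := by
  induction n with
  | zero =>
    exact fun t ht _ => E.invariantAt_zero.flow le_rfl ht fun p ⟨_, hp⟩ => by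
      linarith [E.etime_monotone (Nat.zero_le p)]
  | succ n ih =>
    intro t ht htn
    rcases lt_or_ge t (E.etime n) with hlt | hge
    · exact ih t ht hlt
    · refine (E.invariantAt_etime n ih).flow (E.etime_pos n).le hge fun p ⟨h₁, h₂⟩ => ?_
      linarith [E.etime_monotone (Nat.succ_le_of_lt (E.etime_strictMono.lt_iff_lt.mp h₁))]

lemma invariantAt {t : ℝ} (ht : 0 ≤ t) : E.InvariantAt t :=
  let ⟨n, hn⟩ := E.exists_lt_etime t
  E.invariantAt_of_lt_etime n t ht hn

end Execution

theorem set_membership_general {V : Type*} [Fintype V] {m : ℕ}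
    (G : Env V) (s : Fin m → ℝ) (Φ : V → ℝ → ℝ) (Δlow Δbar ΔH : ℝ)
    (E : Execution G m s Φ Δlow Δbar ΔH)
    (tbar : ℝ) :
    ∀ (k : V) (t : ℝ), 0 ≤ t → t ≤ tbar →
      (k ∈ (E.state t).P ((E.state t).ID k)) ∧
      ({i : Fin m | k ∈ (E.state t).P i}.encard ≤ 2) ∧
      ((E.state t).T ((E.state t).ID k) = 0 →
        ∀ j : Fin m, j ≠ (E.state t).ID k → k ∉ (E.state t).P j) ∧
      (∀ j : Fin m, j ≠ (E.state t).ID k → k ∈ (E.state t).P j →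
        ∀ l : Fin m, l ≠ j → l ≠ (E.state t).ID k →
          (E.state t).P j ∩ (E.state t).Pid l = ∅) := by
  intro k t ht _
  obtain ⟨hinv, hrec⟩ := E.invariantAt ht
  refine ⟨hinv.mem_P_ID k, hinv.encard_le_two k, fun hT j hj hk => ?_,
    fun j hj hk l hlj hlk => hinv.inter_Pid_eq_empty hj hk hlj hlk⟩
  have hlate : t ≤ (E.state t).ω j + Δbar :=
    E.le_add_Δbar (j := j) (hinv.ω_nonneg j) fun n hn hlt => hn ▸ hrec n hlt.le
  exact (hinv.T_ID_pos E.ΔH_pos hlate hj hk).ne' hT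

/-- Proposition 2, set membership.  Under Assumption 1, with
all exchanges prior to a fixed time `t̄ ≥ 0` well-posed and performed via
Algorithm 1, for every `k ∈ Q` and every time `t ≤ t̄`: (1) `k ∈ P_{ID_k}`;
(2) `k` belongs to at most two elements of `P`; (3) if `T_{ID_k} = 0` then
`k ∉ P_j` for every `j ≠ ID_k`; and (4) if `k ∈ P_j` with `j ≠ ID_k`, then
`P_j ∩ P^ID_ℓ = ∅` for every `ℓ ∉ {j, ID_k}`. -/
theorem set_membership {V : Type*} [Fintype V] [DecidableEq V] {m : ℕ}
    (G : Env V) (s : Fin m → ℝ) (Φ : V → ℝ → ℝ) (Δlow Δbar ΔH : ℝ)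
    (E : Execution G m s Φ Δlow Δbar ΔH)
    (tbar : ℝ) (htbar : 0 ≤ tbar) :
    ∀ (k : V) (t : ℝ), 0 ≤ t → t ≤ tbar →
      (k ∈ (E.state t).P ((E.state t).ID k)) ∧
      ({i : Fin m | k ∈ (E.state t).P i}.encard ≤ 2) ∧
      ((E.state t).T ((E.state t).ID k) = 0 →
        ∀ j : Fin m, j ≠ (E.state t).ID k → k ∉ (E.state t).P j) ∧
      (∀ j : Fin m, j ≠ (E.state t).ID k → k ∈ (E.state t).P j →
        ∀ l : Fin m, l ≠ j → l ≠ (E.state t).ID k →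
          (E.state t).P j ∩ (E.state t).Pid l = ∅) :=
  set_membership_general G s Φ Δlow Δbar ΔH E tbar
end
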